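/- arXiv:1302.1124 — 4 statements merged into one kernel-verified Lean document; each statement's English description precedes it below -/
import Mathlib

section
/- Let A = K[x₁,…,xₙ] be a polynomial ring over a field K of prime characteristic p, let W ⊆ A be a multiplicatively closed subset, and let e ≥ 1. For every ideal L of the localization W⁻¹A, the contraction of the Frobenius power equals the Frobenius power of the contraction: L^{[p^e]} ∩ A = (L ∩ A)^{[p^e]}. -/
/-!
Write `q = p ^ e`, `A = K[x₁, …, xₙ]` and `J = L ∩ A`. Since every element of `L` is a unit
times the image of an element of `J`, an `x ∈ L^{[q]} ∩ A` satisfies `w x ∈ J^{[q]}` for some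
`w ∈ W`, and `w` is a nonzerodivisor on `A / J`. So it suffices that Frobenius powers preserve
nonzerodivisors on quotients, which is Kunz's flatness of Frobenius for `A`: the subring
`A^q ≅ A` of `q`-th powers has `A` as a free module, with basis `x^β t` for `β < q`
componentwise and `t` running through a basis of `K` over `K^q`. Then `J^{[q]} = J^q A` is a
flat extension of the ideal `J^q` of `A^q`, on which `w^q` is a nonzerodivisor, and `w` divides
`w^q`.
-/

/-- The `e`-th Frobenius power `L^{[p^e]}` of an ideal `L`: the ideal generated by
the `p^e`-th powers of the elements of `L`. -/
def frobeniusPower {R : Type*} [CommRing R] (p e : ℕ) (L : Ideal R) : Ideal R :=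
  Ideal.span ((fun a => a ^ p ^ e) '' (L : Set R))

theorem IsSMulRegular.quotient_smul_top {R M : Type*} [CommRing R] [AddCommGroup M] [Module R M]
    [Module.Flat R M] {I : Ideal R} {r : R} (h : IsSMulRegular (R ⧸ I) r) :
    IsSMulRegular (M ⧸ I • (⊤ : Submodule R M)) r :=
  (LinearEquiv.isSMulRegular_congr (TensorProduct.tensorQuotEquivQuotSMul M I) r).mp
    (h.lTensor M)

theorem IsSMulRegular.quotient_map_ringEquiv {R S : Type*} [CommRing R] [CommRing S]
    (f : R ≃+* S) {I : Ideal R} {r : R} (h : IsSMulRegular (R ⧸ I) r) :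
    IsSMulRegular (S ⧸ I.map f) (f r) := by
  rw [isSMulRegular_quotient_iff_mem_of_smul_mem] at h ⊢
  intro y hy
  rw [← Ideal.comap_symm, Ideal.mem_comap] at hy ⊢
  exact h _ (by simpa using hy)

theorem IsLocalization.isSMulRegular_quotient_comap {R S : Type*} [CommRing R] [CommRing S]
    [Algebra R S] (M : Submonoid R) [IsLocalization M S] (L : Ideal S) {m : R} (hm : m ∈ M) :
    IsSMulRegular (R ⧸ L.comap (algebraMap R S)) m := by
  rw [isSMulRegular_quotient_iff_mem_of_smul_mem]
  intro y hy
  rw [Ideal.mem_comap, smul_eq_mul, map_mul] at hy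
  exact (Ideal.unit_mul_mem_iff_mem L (IsLocalization.map_units S ⟨m, hm⟩)).mp hy

theorem frobeniusPower_eq_map {R : Type*} [CommRing R] (p e : ℕ) [ExpChar R p] (L : Ideal R) :
    frobeniusPower p e L = L.map (iterateFrobenius R p e) :=
  rfl

theorem frobeniusPower_comap_le {R S : Type*} [CommRing R] [CommRing S] (f : R →+* S)
    (p e : ℕ) (L : Ideal S) :
    frobeniusPower p e (L.comap f) ≤ (frobeniusPower p e L).comap f := by
  refine Ideal.span_le.mpr ?_
  rintro _ ⟨a, ha, rfl⟩
  rw [SetLike.mem_coe, Ideal.mem_comap, map_pow]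
  exact Ideal.subset_span ⟨f a, ha, rfl⟩

theorem IsLocalization.frobeniusPower_le_map_comap {R S : Type*} [CommRing R] [CommRing S]
    [Algebra R S] (M : Submonoid R) [IsLocalization M S] (p e : ℕ) (L : Ideal S) :
    frobeniusPower p e L ≤
      (frobeniusPower p e (L.comap (algebraMap R S))).map (algebraMap R S) := by
  refine Ideal.span_le.mpr ?_
  rintro _ ⟨a, ha, rfl⟩
  obtain ⟨⟨b, u⟩, hbu⟩ := IsLocalization.surj M a
  have hb : b ∈ L.comap (algebraMap R S) := by
    rw [Ideal.mem_comap, ← hbu]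
    exact L.mul_mem_right _ ha
  rw [SetLike.mem_coe, IsLocalization.mem_map_algebraMap_iff M]
  exact ⟨⟨⟨b ^ p ^ e, Ideal.subset_span ⟨b, hb, rfl⟩⟩, u ^ p ^ e⟩, by simp [← mul_pow, hbu]⟩

namespace MvPolynomial

theorem coeff_smul_add_expand_mul_monomial {σ R : Type*} [CommSemiring R] [DecidableEq σ]
    {q : ℕ} (hq : 0 < q) {β β' : σ →₀ ℕ} (hβ : ∀ i, β i < q) (hβ' : ∀ i, β' i < q)
    (g : MvPolynomial σ R) (γ : σ →₀ ℕ) (a : R) :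
    coeff (q • γ + β) (expand q g * monomial β' a) = if β' = β then coeff γ g * a else 0 := by
  rw [coeff_mul_monomial']
  split_ifs with hle hββ' hββ'
  · rw [hββ', add_tsub_cancel_right, coeff_expand_smul _ hq.ne']
  · obtain ⟨i, hi⟩ : ∃ i, β' i ≠ β i := by
      by_contra! h
      exact hββ' (Finsupp.ext h)
    rw [coeff_expand_of_not_dvd _ (i := i), zero_mul]
    rintro ⟨k, hk⟩
    have hle_i := hle i
    simp only [Finsupp.tsub_apply, Finsupp.add_apply, Finsupp.smul_apply, smul_eq_mul]
      at hk hle_i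
    have hmod := congrArg (· % q) (show β i + q * γ i = β' i + q * k by omega)
    simp only [Nat.add_mul_mod_self_left, Nat.mod_eq_of_lt (hβ i),
      Nat.mod_eq_of_lt (hβ' i)] at hmod
    exact hi hmod.symm
  · exact absurd (hββ' ▸ le_add_self) hle
  · rfl

theorem pow_expChar_pow_eq_expand_map {σ K : Type*} [CommSemiring K] (p e : ℕ) [ExpChar K p]
    (g : MvPolynomial σ K) : g ^ p ^ e = expand (p ^ e) (map (iterateFrobenius K p e) g) := by
  rw [← map_expand]
  exact (map_iterateFrobenius_expand p g e).symm

section FrobeniusBasis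

variable (σ K : Type*) [Field K] (p e : ℕ) [ExpChar K p]

abbrev FrobeniusBasisIndex : Type _ :=
  {β : σ →₀ ℕ // ∀ i, β i < p ^ e} ×
    Module.Basis.ofVectorSpaceIndex (iterateFrobenius K p e).fieldRange K

noncomputable def frobeniusBasisFun : FrobeniusBasisIndex σ K p e → MvPolynomial σ K :=
  fun i => monomial i.1.1 (i.2 : K)

theorem linearIndependent_frobeniusBasisFun :
    LinearIndependent (iterateFrobenius (MvPolynomial σ K) p e).range
      (frobeniusBasisFun σ K p e) := by
  classical
  rw [linearIndependent_iff']
  intro s c hsum i hi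
  choose g hg using fun j => RingHom.mem_range.mp (c j).2
  have hq : 0 < p ^ e := expChar_pow_pos K p e
  have hterm : ∀ γ j, coeff (p ^ e • γ + i.1.1) (c j • frobeniusBasisFun σ K p e j) =
      if j.1 = i.1 then iterateFrobenius K p e (coeff γ (g j)) * j.2 else 0 := by
    intro γ j
    rw [Subring.smul_def, smul_eq_mul, ← hg, iterateFrobenius_def, pow_expChar_pow_eq_expand_map,
      frobeniusBasisFun, coeff_smul_add_expand_mul_monomial hq i.1.2 j.1.2, coeff_map]
    simp only [Subtype.ext_iff]
  suffices g i = 0 by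
    ext1
    rw [← hg, this, map_zero]
    rfl
  ext γ
  have hcoeff := congrArg (coeff (p ^ e • γ + i.1.1)) hsum
  rw [coeff_sum, Finset.sum_congr rfl (fun j _ => hterm γ j), ← Finset.sum_filter,
    coeff_zero] at hcoeff
  have hfibre : LinearIndependent (iterateFrobenius K p e).fieldRange
      (fun j : {j : FrobeniusBasisIndex σ K p e // j.1 = i.1} => (j.1.2 : K)) :=
    LinearIndependent.comp (Module.Basis.ofVectorSpaceIndex.linearIndependent _ K)
      (fun j : {j : FrobeniusBasisIndex σ K p e // j.1 = i.1} => j.1.2)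
      fun j j' h => Subtype.ext (Prod.ext (j.2.trans j'.2.symm) h)
  let a : FrobeniusBasisIndex σ K p e → (iterateFrobenius K p e).fieldRange :=
    fun j => ⟨iterateFrobenius K p e (coeff γ (g j)), RingHom.mem_fieldRange_self _ _⟩
  have hsum' : ∑ j ∈ s.subtype (·.1 = i.1), a j.1 • (j.1.2 : K) = 0 := by
    rw [Finset.sum_subtype_eq_sum_filter (f := fun j => a j • (j.2 : K))]
    exact hcoeff
  have hzero := linearIndependent_iff'.mp hfibre _ _ hsum' ⟨i, rfl⟩ (Finset.mem_subtype.mpr hi)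
  rw [coeff_zero, ← map_eq_zero (iterateFrobenius K p e)]
  exact congrArg Subtype.val hzero

theorem top_le_span_frobeniusBasisFun :
    ⊤ ≤ Submodule.span (iterateFrobenius (MvPolynomial σ K) p e).range
      (Set.range (frobeniusBasisFun σ K p e)) := by
  rintro f -
  induction f using MvPolynomial.induction_on' with
  | add f g hf hg => exact add_mem hf hg
  | monomial δ a =>
    have hq : 0 < p ^ e := expChar_pow_pos K p e
    let γ : σ →₀ ℕ := δ.mapRange (· / p ^ e) (Nat.zero_div _)
    let β : σ →₀ ℕ := δ.mapRange (· % p ^ e) (Nat.zero_mod _)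
    have hδ : p ^ e • γ + β = δ := Finsupp.ext fun i => Nat.div_add_mod (δ i) (p ^ e)
    have hβ : ∀ i, β i < p ^ e := fun i => Nat.mod_lt _ hq
    let bK := Module.Basis.ofVectorSpace (iterateFrobenius K p e).fieldRange K
    rw [← bK.linearCombination_repr a, Finsupp.linearCombination_apply, Finsupp.sum, map_sum]
    refine sum_mem fun t _ => ?_
    obtain ⟨d, hd⟩ := (bK.repr a t).2
    have hterm : monomial δ (bK.repr a t • bK t) =
        (⟨_, RingHom.mem_range_self _ (monomial γ d)⟩ :
            (iterateFrobenius (MvPolynomial σ K) p e).range) •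
          frobeniusBasisFun σ K p e (⟨β, hβ⟩, t) := by
      rw [Module.Basis.coe_ofVectorSpace]
      change monomial δ ((bK.repr a t : K) * t) =
        iterateFrobenius _ p e (monomial γ d) * monomial β (t : K)
      rw [iterateFrobenius_def, monomial_pow, monomial_mul, hδ, ← hd, iterateFrobenius_def]
    rw [hterm]
    exact Submodule.smul_mem _ _ (Submodule.subset_span ⟨_, rfl⟩)

instance free_iterateFrobenius_range :
    Module.Free (iterateFrobenius (MvPolynomial σ K) p e).range (MvPolynomial σ K) :=
  .of_basis (.mk (linearIndependent_frobeniusBasisFun σ K p e)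
    (top_le_span_frobeniusBasisFun σ K p e))

end FrobeniusBasis

theorem isSMulRegular_quotient_frobeniusPower {σ K : Type*} [Field K] (p e : ℕ) [ExpChar K p]
    {J : Ideal (MvPolynomial σ K)} {w : MvPolynomial σ K}
    (h : IsSMulRegular (MvPolynomial σ K ⧸ J) w) :
    IsSMulRegular (MvPolynomial σ K ⧸ frobeniusPower p e J) w := by
  set φ := iterateFrobenius (MvPolynomial σ K) p e
  let ψ : MvPolynomial σ K ≃+* φ.range := RingEquiv.ofBijective φ.rangeRestrict
    ⟨fun x y hxy => iterateFrobenius_inj _ p e (congrArg Subtype.val hxy),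
      φ.rangeRestrict_surjective⟩
  have hJ : J.map ψ • (⊤ : Submodule φ.range (MvPolynomial σ K)) =
      (frobeniusPower p e J).restrictScalars φ.range := by
    rw [Ideal.smul_top_eq_map, frobeniusPower_eq_map,
      show iterateFrobenius _ p e = (algebraMap φ.range _).comp (ψ : _ →+* φ.range) from rfl,
      ← Ideal.map_map]
    rfl
  have : Module.Flat φ.range (MvPolynomial σ K) := Module.Flat.of_free
  have hreg := (h.quotient_map_ringEquiv ψ).quotient_smul_top (M := MvPolynomial σ K)
  rw [hJ, isSMulRegular_quotient_iff_mem_of_smul_mem] at hreg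
  rw [isSMulRegular_quotient_iff_mem_of_smul_mem]
  intro x hx
  refine hreg x ?_
  have hψ : ψ w • x = w ^ (p ^ e - 1) * (w • x) := by
    change φ w * x = _
    rw [iterateFrobenius_def, smul_eq_mul, ← mul_assoc, ← pow_succ,
      Nat.sub_add_cancel (expChar_pow_pos K p e)]
  rw [hψ]
  exact Ideal.mul_mem_left _ _ hx

end MvPolynomial

theorem frobeniusPower_comap_localization_general (p n : ℕ) (hp : p.Prime)
    (K : Type*) [Field K] [CharP K p]
    (W : Submonoid (MvPolynomial (Fin n) K)) (e : ℕ)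
    (L : Ideal (Localization W)) :
    (frobeniusPower p e L).comap
        (algebraMap (MvPolynomial (Fin n) K) (Localization W)) =
      frobeniusPower p e
        (L.comap (algebraMap (MvPolynomial (Fin n) K) (Localization W))) := by
  have : ExpChar K p := .prime hp
  refine le_antisymm (fun x hx => ?_) (frobeniusPower_comap_le _ p e L)
  obtain ⟨w, hw, hwx⟩ :=
    (IsLocalization.algebraMap_mem_map_algebraMap_iff W (Localization W) _ x).mp
      (IsLocalization.frobeniusPower_le_map_comap W p e L hx)
  exact mem_of_isSMulRegular_quotient_of_smul_mem
    (MvPolynomial.isSMulRegular_quotient_frobeniusPower p e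
      (IsLocalization.isSMulRegular_quotient_comap W L hw)) hwx

/-- Let `A = K[x₁, …, xₙ]` be a polynomial ring over a field `K` of prime
characteristic `p`, let `W ⊆ A` be multiplicatively closed and `e ≥ 1`. For every
ideal `L ⊆ W⁻¹A`, contraction commutes with Frobenius powers:
`L^{[p^e]} ∩ A = (L ∩ A)^{[p^e]}`. -/
theorem frobeniusPower_comap_localization (p n : ℕ) (hp : p.Prime)
    (K : Type*) [Field K] [CharP K p]
    (W : Submonoid (MvPolynomial (Fin n) K)) (e : ℕ) (he : 1 ≤ e)
    (L : Ideal (Localization W)) :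
    (frobeniusPower p e L).comap
        (algebraMap (MvPolynomial (Fin n) K) (Localization W)) =
      frobeniusPower p e
        (L.comap (algebraMap (MvPolynomial (Fin n) K) (Localization W))) :=
  frobeniusPower_comap_localization_general p n hp K W e L
end

section
/- Let A = K[x₁,…,xₙ] be a polynomial ring over a field K of prime characteristic p, let W ⊆ A be a multiplicatively closed subset, let J be an ideal of A, and let e ≥ 1. Suppose L₀ is the smallest ideal of A (with respect to inclusion) such that W⁻¹J ∩ A ⊆ L₀^{[p^e]}, i.e. L₀ = I_e(W⁻¹J ∩ A). Then the extension W⁻¹L₀ is the smallest ideal L of W⁻¹A such that W⁻¹J ⊆ L^{[p^e]}; in other words, I_e(W⁻¹J) exists and I_e(W⁻¹J) = W⁻¹ I_e(W⁻¹J ∩ A). -/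
/-- Coordinates of `R` over its subring of `q`-th powers, semilinear along `g ↦ g ^ q`. -/
structure FrobeniusCoordinates (R : Type*) [CommRing R] (q : ℕ) (ι : Type*) where
  repr : R →+ (ι →₀ R)
  gen : ι → R
  repr_pow_mul (g x : R) : repr (g ^ q * x) = g • repr x
  sum_repr (x : R) : (repr x).sum (fun i c => c ^ q * gen i) = x

theorem Finsupp.floorDiv_smul_add {σ : Type*} {q : ℕ} (hq : 0 < q) (δ β : σ →₀ ℕ) :
    (q • δ + β) ⌊/⌋ q = δ + β ⌊/⌋ q := by
  ext i
  simp [Nat.mul_add_div hq]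

namespace FrobeniusCoordinates

section Ideal

variable {R : Type*} [CommRing R] {p e : ℕ} {ι : Type*}

theorem mem_frobeniusPower_iff (C : FrobeniusCoordinates R (p ^ e) ι) {I : Ideal R} {x : R} :
    x ∈ frobeniusPower p e I ↔ ∀ i, C.repr x i ∈ I := by
  refine ⟨fun hx => ?_, fun hx => ?_⟩
  · suffices ∀ r i, C.repr (r * x) i ∈ I by simpa using this 1
    induction hx using Submodule.span_induction with
    | mem _ hy =>
      obtain ⟨u, hu, rfl⟩ := hy
      intro r i
      rw [mul_comm, C.repr_pow_mul, Finsupp.smul_apply, smul_eq_mul]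
      exact I.mul_mem_right _ hu
    | zero => simp
    | add y z _ _ hy hz => intro r i; simpa [mul_add] using I.add_mem (hy r i) (hz r i)
    | smul s y _ hy => intro r i; simpa [mul_assoc] using hy (r * s) i
  · rw [← C.sum_repr x]
    exact Ideal.sum_mem _ fun i _ => Ideal.mul_mem_right _ _ (Ideal.subset_span ⟨_, hx i, rfl⟩)

theorem pow_mul_mem_frobeniusPower_iff (C : FrobeniusCoordinates R (p ^ e) ι) {I : Ideal R}
    {w x : R} : w ^ p ^ e * x ∈ frobeniusPower p e I ↔ ∀ i, w * C.repr x i ∈ I := by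
  simp [C.mem_frobeniusPower_iff, C.repr_pow_mul]

end Ideal

section Field

variable (K : Type*) [Field K] (p e : ℕ) [ExpChar K p]

noncomputable def ofField :
    FrobeniusCoordinates K (p ^ e)
      (Module.Basis.ofVectorSpaceIndex (iterateFrobenius K p e).fieldRange K) :=
  let φ := (iterateFrobenius K p e).rangeRestrictFieldEquiv
  let b := Module.Basis.ofVectorSpace (iterateFrobenius K p e).fieldRange K
  { repr := (Finsupp.mapRange.addMonoidHom φ.symm.toAddMonoidHom).comp b.repr.toAddMonoidHom
    gen := b
    repr_pow_mul := fun g x => by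
      have : g ^ p ^ e * x = φ g • x := by
        rw [Subfield.smul_def, RingHom.rangeRestrictFieldEquiv_apply_coe, iterateFrobenius_def,
          smul_eq_mul]
      ext i
      simp [this]
    sum_repr := fun x => by
      have hφ (c) : (φ.symm c : K) ^ p ^ e = c := by
        rw [← iterateFrobenius_def, RingHom.rangeRestrictFieldEquiv_apply_symm_apply]
      conv_rhs => rw [← b.linearCombination_repr x]
      simp [Finsupp.sum_mapRange_index, zero_pow (expChar_pow_pos K p e).ne',
        Finsupp.linearCombination_apply, hφ, Subfield.smul_def] }

end Field

section MvPolynomial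

open MvPolynomial

variable {R : Type*} [CommRing R] {p e : ℕ} {ι σ : Type*} (C : FrobeniusCoordinates R (p ^ e) ι)

/-- With `β = q • (β ⌊/⌋ q) + r`, the coordinates of `c X^β` are `cᵢ(c) X^(β ⌊/⌋ q)` at `(i, r)`. -/
noncomputable def monomialRepr (β : σ →₀ ℕ) : R →+ ((ι × (σ →₀ ℕ)) →₀ MvPolynomial σ R) :=
  (Finsupp.liftAddHom fun i => (Finsupp.singleAddHom (i, β - p ^ e • (β ⌊/⌋ p ^ e))).comp
    (monomial (β ⌊/⌋ p ^ e)).toAddMonoidHom).comp C.repr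

theorem monomialRepr_apply (β : σ →₀ ℕ) (c : R) :
    C.monomialRepr β c = (C.repr c).sum fun i a =>
      Finsupp.single (i, β - p ^ e • (β ⌊/⌋ p ^ e)) (monomial (β ⌊/⌋ p ^ e) a) :=
  Finsupp.liftAddHom_apply _ _

noncomputable def mvPolynomialRepr :
    MvPolynomial σ R →+ ((ι × (σ →₀ ℕ)) →₀ MvPolynomial σ R) :=
  (Finsupp.liftAddHom C.monomialRepr).comp AddMonoidAlgebra.coeffAddEquiv.toAddMonoidHom

theorem mvPolynomialRepr_monomial (β : σ →₀ ℕ) (c : R) :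
    C.mvPolynomialRepr (monomial β c) = C.monomialRepr β c :=
  Finsupp.liftAddHom_apply_single _ _ _

variable [ExpChar R p]

theorem monomialRepr_pow_mul (δ β : σ →₀ ℕ) (d c : R) :
    C.monomialRepr (p ^ e • δ + β) (d ^ p ^ e * c) = monomial δ d • C.monomialRepr β c := by
  have hq := expChar_pow_pos R p e
  rw [monomialRepr_apply, monomialRepr_apply, C.repr_pow_mul, Finsupp.sum_smul_index (by simp),
    Finsupp.smul_sum, Finsupp.floorDiv_smul_add hq, smul_add, add_tsub_add_eq_tsub_left]
  simp [Finsupp.smul_single, monomial_mul]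

theorem sum_monomialRepr (β : σ →₀ ℕ) (c : R) :
    (C.monomialRepr β c).sum (fun j P => P ^ p ^ e * monomial j.2 (C.gen j.1)) =
      monomial β c := by
  have hq := expChar_pow_pos R p e
  have hβ : p ^ e • (β ⌊/⌋ p ^ e) + (β - p ^ e • (β ⌊/⌋ p ^ e)) = β :=
    add_tsub_cancel_of_le (smul_floorDiv_le hq)
  conv_rhs => rw [← C.sum_repr c, map_finsuppSum]
  rw [monomialRepr_apply, Finsupp.sum_sum_index (by simp [zero_pow hq.ne'])
    (by simp [add_pow_expChar_pow, add_mul])]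
  simp [monomial_pow, monomial_mul, hβ, zero_pow hq.ne']

noncomputable def mvPolynomial :
    FrobeniusCoordinates (MvPolynomial σ R) (p ^ e) (ι × (σ →₀ ℕ)) where
  repr := C.mvPolynomialRepr
  gen j := monomial j.2 (C.gen j.1)
  repr_pow_mul g x := by
    induction g using MvPolynomial.induction_on' with
    | monomial δ d =>
      induction x using MvPolynomial.induction_on' with
      | monomial β c =>
        rw [monomial_pow, monomial_mul, mvPolynomialRepr_monomial, mvPolynomialRepr_monomial,
          monomialRepr_pow_mul]
      | add x y hx hy => rw [mul_add, map_add, map_add, hx, hy, smul_add]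
    | add g h hg hh => rw [add_pow_expChar_pow, add_mul, map_add, hg, hh, add_smul]
  sum_repr x := by
    have hq := expChar_pow_pos R p e
    induction x using MvPolynomial.induction_on' with
    | monomial β c => rw [mvPolynomialRepr_monomial, sum_monomialRepr]
    | add x y hx hy =>
      rw [map_add, Finsupp.sum_add_index' (by simp [zero_pow hq.ne'])
        (by simp [add_pow_expChar_pow, add_mul]), hx, hy]

end MvPolynomial

end FrobeniusCoordinates

theorem Ideal.map_frobeniusPower_le {R S : Type*} [CommRing R] [CommRing S] (f : R →+* S)
    (p e : ℕ) (I : Ideal R) :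
    (frobeniusPower p e I).map f ≤ frobeniusPower p e (I.map f) := by
  rw [frobeniusPower, Ideal.map_span, Ideal.span_le]
  rintro _ ⟨_, ⟨x, hx, rfl⟩, rfl⟩
  exact Ideal.subset_span ⟨f x, Ideal.mem_map_of_mem f hx, (map_pow f x _).symm⟩

namespace IsLocalization

variable {A : Type*} [CommRing A] {B : Type*} [CommRing B] [Algebra A B]

theorem frobeniusPower_le_map_frobeniusPower_under (W : Submonoid A) [IsLocalization W B]
    (p e : ℕ) (L : Ideal B) :
    frobeniusPower p e L ≤ (frobeniusPower p e (L.under A)).map (algebraMap A B) := by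
  conv_lhs => rw [← IsLocalization.map_under W B L]
  rw [frobeniusPower, Ideal.span_le]
  rintro _ ⟨y, hy, rfl⟩
  obtain ⟨⟨c, s⟩, hcs⟩ := (IsLocalization.mem_map_algebraMap_iff W B).mp hy
  obtain ⟨v, hv⟩ := IsLocalization.map_units B s
  have hy' : y = algebraMap A B c * ↑v⁻¹ := by rw [Units.eq_mul_inv_iff_mul_eq, hv, hcs]
  rw [SetLike.mem_coe, hy']
  dsimp only
  rw [mul_pow, ← map_pow]
  exact Ideal.mul_mem_right _ _ (Ideal.mem_map_of_mem _ (Ideal.subset_span ⟨c, c.2, rfl⟩))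

theorem mem_under_of_mul_mem (W : Submonoid A) [IsLocalization W B] {L : Ideal B} {s x : A}
    (hs : s ∈ W) (h : s * x ∈ L.under A) :
    x ∈ L.under A := by
  rw [Ideal.mem_comap, map_mul] at h
  exact (Ideal.unit_mul_mem_iff_mem L (IsLocalization.map_units B ⟨s, hs⟩)).mp h

theorem under_frobeniusPower_le (W : Submonoid A) [IsLocalization W B] {p e : ℕ} {ι : Type*}
    (C : FrobeniusCoordinates A (p ^ e) ι) (hq : 0 < p ^ e) (L : Ideal B) :
    (frobeniusPower p e L).under A ≤ frobeniusPower p e (L.under A) := by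
  intro x hx
  obtain ⟨s, hs, hsx⟩ := (IsLocalization.algebraMap_mem_map_algebraMap_iff W B _ x).mp
    (frobeniusPower_le_map_frobeniusPower_under W p e L hx)
  have : s ^ p ^ e * x ∈ frobeniusPower p e (L.under A) := by
    rw [← Nat.sub_add_cancel hq, pow_succ, mul_assoc]
    exact Ideal.mul_mem_left _ _ hsx
  rw [C.pow_mul_mem_frobeniusPower_iff] at this
  exact C.mem_frobeniusPower_iff.mpr fun i => mem_under_of_mul_mem W hs (this i)

end IsLocalization

theorem Ie_localization_of_Ie_contraction_general (p n : ℕ) (hp : p.Prime)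
    (K : Type*) [Field K] [CharP K p]
    (W : Submonoid (MvPolynomial (Fin n) K)) (J : Ideal (MvPolynomial (Fin n) K))
    (e : ℕ) (L₀ : Ideal (MvPolynomial (Fin n) K))
    (h₁ : (J.map (algebraMap (MvPolynomial (Fin n) K) (Localization W))).comap
            (algebraMap (MvPolynomial (Fin n) K) (Localization W)) ≤
          frobeniusPower p e L₀)
    (h₂ : ∀ L : Ideal (MvPolynomial (Fin n) K),
          (J.map (algebraMap (MvPolynomial (Fin n) K) (Localization W))).comap
              (algebraMap (MvPolynomial (Fin n) K) (Localization W)) ≤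
            frobeniusPower p e L → L₀ ≤ L) :
    J.map (algebraMap (MvPolynomial (Fin n) K) (Localization W)) ≤
        frobeniusPower p e
          (L₀.map (algebraMap (MvPolynomial (Fin n) K) (Localization W))) ∧
      ∀ L : Ideal (Localization W),
        J.map (algebraMap (MvPolynomial (Fin n) K) (Localization W)) ≤
          frobeniusPower p e L →
        L₀.map (algebraMap (MvPolynomial (Fin n) K) (Localization W)) ≤ L := by
  have : ExpChar K p := ExpChar.prime hp
  refine ⟨?_, fun L hL => ?_⟩
  · exact (Ideal.map_mono (Ideal.le_comap_map.trans h₁)).trans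
      (Ideal.map_frobeniusPower_le _ p e L₀)
  · rw [Ideal.map_le_iff_le_comap]
    exact h₂ _ ((Ideal.comap_mono hL).trans (IsLocalization.under_frobeniusPower_le W
      (FrobeniusCoordinates.ofField K p e).mvPolynomial (pow_pos hp.pos e) L))

/-- Let `A = K[x₁, …, xₙ]` be a polynomial ring over a field `K` of prime
characteristic `p`, `W ⊆ A` multiplicatively closed, `J ⊆ A` an ideal and `e ≥ 1`.
If `L₀ = I_e(W⁻¹J ∩ A)` is the smallest ideal of `A` whose `e`-th Frobenius power
contains the contraction `W⁻¹J ∩ A`, then the extension `W⁻¹L₀` is the smallest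
ideal `L` of `W⁻¹A` with `W⁻¹J ⊆ L^{[p^e]}`; that is, `I_e(W⁻¹J)` exists and equals
`W⁻¹ I_e(W⁻¹J ∩ A)`. -/
theorem Ie_localization_of_Ie_contraction (p n : ℕ) (hp : p.Prime)
    (K : Type*) [Field K] [CharP K p]
    (W : Submonoid (MvPolynomial (Fin n) K)) (J : Ideal (MvPolynomial (Fin n) K))
    (e : ℕ) (he : 1 ≤ e) (L₀ : Ideal (MvPolynomial (Fin n) K))
    (h₁ : (J.map (algebraMap (MvPolynomial (Fin n) K) (Localization W))).comap
            (algebraMap (MvPolynomial (Fin n) K) (Localization W)) ≤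
          frobeniusPower p e L₀)
    (h₂ : ∀ L : Ideal (MvPolynomial (Fin n) K),
          (J.map (algebraMap (MvPolynomial (Fin n) K) (Localization W))).comap
              (algebraMap (MvPolynomial (Fin n) K) (Localization W)) ≤
            frobeniusPower p e L → L₀ ≤ L) :
    J.map (algebraMap (MvPolynomial (Fin n) K) (Localization W)) ≤
        frobeniusPower p e
          (L₀.map (algebraMap (MvPolynomial (Fin n) K) (Localization W))) ∧
      ∀ L : Ideal (Localization W),
        J.map (algebraMap (MvPolynomial (Fin n) K) (Localization W)) ≤
          frobeniusPower p e L →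
        L₀.map (algebraMap (MvPolynomial (Fin n) K) (Localization W)) ≤ L :=
  Ie_localization_of_Ie_contraction_general p n hp K W J e L₀ h₁ h₂
end

section
/- Let A be a commutative ring and M an A-module generated by elements g₁, …, g_s. Let φ : A^s → M be the A-linear map sending the j-th standard basis vector e_j to g_j (so φ is surjective), and let J be an s × t matrix with entries in A such that the image of the induced A-linear map A^t → A^s, v ↦ J·v, equals ker φ. Fix i ∈ {1, …, s} and let J_i denote the (s−1) × t matrix obtained from J by deleting the i-th row. Then M is generated by g_i alone (A·g_i = M) if and only if the A-linear map A^t → A^{s−1} induced by J_i is surjective (its image is all of A^{s−1}). -/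
/-!
Both sides say that `A ∙ eᵢ + ker φ = Aˢ`. For the left side, pull `A ∙ g i = φ(A ∙ eᵢ)` back
along the surjection `φ`. For the right side, deleting the `i`-th coordinate is a surjection
`Aˢ → A^(s-1)` with kernel `A ∙ eᵢ` that carries `ker φ = range J` onto `range Jᵢ`.
-/

open Submodule

theorem Submodule.map_eq_top_iff_sup_ker_eq_top {R M N : Type*} [Ring R] [AddCommGroup M]
    [AddCommGroup N] [Module R M] [Module R N] {f : M →ₗ[R] N} (hf : Function.Surjective f)
    (p : Submodule R M) : p.map f = ⊤ ↔ p ⊔ LinearMap.ker f = ⊤ := by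
  rw [← comap_map_eq, ← (comap_injective_of_surjective hf).eq_iff, comap_top]

theorem LinearMap.ker_funLeft_subtype_ne {R ι : Type*} [Semiring R] [DecidableEq ι] (i : ι) :
    LinearMap.ker (LinearMap.funLeft R R (Subtype.val : {j // j ≠ i} → ι)) =
      R ∙ Pi.single i 1 := by
  ext x
  rw [LinearMap.mem_ker, mem_span_singleton]
  constructor
  · intro hx
    refine ⟨x i, funext fun j => ?_⟩
    by_cases hj : j = i
    · subst hj; simp
    · simpa [hj] using (congrFun hx ⟨j, hj⟩).symm
  · rintro ⟨a, rfl⟩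
    funext j
    simp [LinearMap.funLeft_apply, j.2]

theorem Matrix.mulVecLin_submatrix_id {R m n l : Type*} [CommSemiring R] [Fintype n]
    (J : Matrix m n R) (r : l → m) :
    (J.submatrix r id).mulVecLin = LinearMap.funLeft R R r ∘ₗ J.mulVecLin := by
  ext v k
  simp [Matrix.mulVec, dotProduct, LinearMap.funLeft_apply]

/-- Let `M` be an `A`-module generated by `g₁, …, g_s`, let `φ : Aˢ → M` send the
`j`-th standard basis vector to `g_j`, and let `J` be an `s × t` matrix over `A`
whose column space (the image of `v ↦ J·v`) equals `ker φ`. For a fixed `i`, let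
`J_i` be the matrix obtained from `J` by deleting the `i`-th row. Then `M` is
generated by `g_i` alone if and only if the map `Aᵗ → A^{s-1}` induced by `J_i`
is surjective. -/
theorem span_singleton_generator_iff_deleted_row_surjective
    (A : Type*) [CommRing A] (M : Type*) [AddCommGroup M] [Module A M]
    (s t : ℕ) (g : Fin s → M)
    (φ : (Fin s → A) →ₗ[A] M) (hφ : ∀ j : Fin s, φ (Pi.single j 1) = g j)
    (hsurj : Function.Surjective φ)
    (J : Matrix (Fin s) (Fin t) A)
    (hJ : LinearMap.range J.mulVecLin = LinearMap.ker φ)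
    (i : Fin s) :
    Submodule.span A {g i} = (⊤ : Submodule A M) ↔
      Function.Surjective
        (Matrix.mulVecLin
          (J.submatrix (fun j : {j : Fin s // j ≠ i} => (j : Fin s)) id)) := by
  have hspan : span A {g i} = (A ∙ (Pi.single i 1 : Fin s → A)).map φ := by
    rw [map_span, Set.image_singleton, hφ]
  have hrestrict_surj : Function.Surjective
      (LinearMap.funLeft A A (Subtype.val : {j : Fin s // j ≠ i} → Fin s)) :=
    LinearMap.funLeft_surjective_of_injective _ _ _ Subtype.val_injective
  rw [hspan, map_eq_top_iff_sup_ker_eq_top hsurj, ← hJ, ← LinearMap.range_eq_top,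
    Matrix.mulVecLin_submatrix_id, LinearMap.range_comp,
    map_eq_top_iff_sup_ker_eq_top hrestrict_surj, LinearMap.ker_funLeft_subtype_ne, sup_comm]
end

section
/- Let A = K[x₁,…,xₙ] be a polynomial ring over a field K of prime characteristic p, let J be an ideal of A, and let e ≥ 1. Then the set of ideals L of A satisfying J ⊆ L^{[p^e]} has a least element with respect to inclusion; that is, I_e(J) exists: there is an ideal I_e(J) of A with J ⊆ I_e(J)^{[p^e]} which is contained in every ideal L of A with J ⊆ L^{[p^e]}. -/
section FrobeniusPower

variable {R ι : Type*} [CommRing R] {p e : ℕ} {π : ι → R →+ R}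

theorem map_mem_of_mem_frobeniusPower (hπ : ∀ i a f, π i (a ^ p ^ e * f) = a * π i f)
    {L : Ideal R} {x : R} (hx : x ∈ frobeniusPower p e L) (i : ι) : π i x ∈ L := by
  obtain ⟨m, c, y, rfl⟩ := Submodule.mem_span_set'.mp hx
  rw [map_sum]
  refine L.sum_mem fun k _ => ?_
  obtain ⟨a, ha, hy⟩ := (y k).2
  rw [smul_eq_mul, ← hy, mul_comm, hπ]
  exact L.mul_mem_right _ ha

theorem exists_isLeast_le_frobeniusPower (hπ : ∀ i a f, π i (a ^ p ^ e * f) = a * π i f)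
    (hspan : ∀ f, f ∈ Ideal.span (Set.range fun i => π i f ^ p ^ e)) (J : Ideal R) :
    ∃ L₀, IsLeast {L | J ≤ frobeniusPower p e L} L₀ := by
  refine ⟨Ideal.span {g | ∃ f ∈ J, ∃ i, π i f = g}, fun f hf => ?_, fun L hL => ?_⟩
  · refine Ideal.span_le.mpr ?_ (hspan f)
    rintro _ ⟨i, rfl⟩
    exact Ideal.subset_span ⟨π i f, Ideal.subset_span ⟨f, hf, i, rfl⟩, rfl⟩
  · rw [Ideal.span_le]
    rintro _ ⟨f, hf, i, rfl⟩
    exact map_mem_of_mem_frobeniusPower hπ (hL hf) i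

end FrobeniusPower

universe u

section Field

variable (K : Type u) [Field K] (p e : ℕ) [ExpChar K p]

theorem exists_frobenius_coordinates : ∃ (ι : Type u) (b : ι → K) (ℓ : ι → K →+ K)
    (T : K → Finset ι), (∀ j a x, ℓ j (a ^ p ^ e * x) = a * ℓ j x) ∧
      ∀ x (I : Finset ι), T x ⊆ I → ∑ j ∈ I, b j * ℓ j x ^ p ^ e = x := by
  set φ := iterateFrobenius K p e
  set root := φ.rangeRestrictFieldEquiv.symm
  have hroot : ∀ y, root y ^ p ^ e = y := fun y =>
    φ.rangeRestrictFieldEquiv_apply_symm_apply y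
  set bs := Module.Basis.ofVectorSpace φ.fieldRange K
  refine ⟨_, bs, fun j => root.toAddMonoidHom.comp (bs.coord j).toAddMonoidHom,
    fun x => (bs.repr x).support, fun j a x => ?_, fun x I hI => ?_⟩
  · have : a ^ p ^ e * x = φ.rangeRestrictFieldEquiv a • x := rfl
    simp [this, root]
  · conv_rhs => rw [← bs.linearCombination_repr x]
    rw [Finsupp.linearCombination_apply, Finsupp.sum_of_support_subset _ hI _ (by simp)]
    refine Finset.sum_congr rfl fun j _ => ?_
    simp [hroot, mul_comm, Subfield.smul_def]

end Field

section Exponents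

variable {σ : Type*}

noncomputable def expDiv (q : ℕ) (d : σ →₀ ℕ) : σ →₀ ℕ := d.mapRange (· / q) (Nat.zero_div q)

noncomputable def expMod (q : ℕ) (d : σ →₀ ℕ) : σ →₀ ℕ := d.mapRange (· % q) (Nat.zero_mod q)

theorem expMod_smul_add (q : ℕ) (c d : σ →₀ ℕ) : expMod q (q • c + d) = expMod q d := by
  ext i
  simp [expMod]

theorem expDiv_smul_add {q : ℕ} (hq : 0 < q) (c d : σ →₀ ℕ) :
    expDiv q (q • c + d) = c + expDiv q d := by
  ext i
  simp [expDiv, Nat.mul_add_div hq]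

theorem expMod_add_smul_expDiv (q : ℕ) (d : σ →₀ ℕ) : expMod q d + q • expDiv q d = d := by
  ext i
  simp [expDiv, expMod, Nat.mod_add_div]

end Exponents

namespace MvPolynomial

variable {σ K : Type*} [CommSemiring K] [DecidableEq σ]

/-- `frobeniusComponent q μ ℓ f = ∑_{d ≡ μ (mod q)} ℓ (coeff d f) X ^ (d / q)`. -/
noncomputable def frobeniusComponent (q : ℕ) (μ : σ →₀ ℕ) (ℓ : K →+ K) :
    MvPolynomial σ K →+ MvPolynomial σ K :=
  (Finsupp.liftAddHom fun d =>
    if expMod q d = μ then (monomial (expDiv q d)).toAddMonoidHom.comp ℓ else 0).comp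
    AddMonoidAlgebra.coeffAddEquiv.toAddMonoidHom

theorem frobeniusComponent_monomial (q : ℕ) (μ : σ →₀ ℕ) (ℓ : K →+ K) (d : σ →₀ ℕ) (c : K) :
    frobeniusComponent q μ ℓ (monomial d c) =
      if expMod q d = μ then monomial (expDiv q d) (ℓ c) else 0 := by
  simp only [frobeniusComponent, AddMonoidAlgebra.coeffAddEquiv, AddEquiv.toAddMonoidHom_eq_coe,
    AddMonoidHom.coe_comp, AddMonoidHom.coe_coe, Function.comp_apply, Equiv.addEquiv_apply,
    AddMonoidAlgebra.coeffEquiv_apply, Finsupp.liftAddHom_apply, map_zero, sum_monomial_eq]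
  split_ifs <;> rfl

variable {p e : ℕ} [ExpChar K p] {ℓ : K →+ K}

theorem frobeniusComponent_pow_mul (hℓ : ∀ a x, ℓ (a ^ p ^ e * x) = a * ℓ x) (μ : σ →₀ ℕ)
    (g f : MvPolynomial σ K) :
    frobeniusComponent (p ^ e) μ ℓ (g ^ p ^ e * f) = g * frobeniusComponent (p ^ e) μ ℓ f := by
  induction g using MvPolynomial.induction_on' with
  | add g₁ g₂ ih₁ ih₂ => rw [add_pow_expChar_pow, add_mul, map_add, ih₁, ih₂, add_mul]
  | monomial d c =>
    induction f using MvPolynomial.induction_on' with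
    | add f₁ f₂ ih₁ ih₂ => rw [mul_add, map_add, ih₁, ih₂, map_add, mul_add]
    | monomial d' c' =>
      rw [monomial_pow, monomial_mul, frobeniusComponent_monomial, frobeniusComponent_monomial,
        expMod_smul_add, expDiv_smul_add (expChar_pow_pos K p e), hℓ]
      split_ifs
      · rw [monomial_mul]
      · rw [mul_zero]

theorem sum_monomial_mul_frobeniusComponent_monomial {ι : Type*} {b : ι → K} {ℓ : ι → K →+ K}
    {I : Finset ι} {M : Finset (σ →₀ ℕ)} {d : σ →₀ ℕ} {c : K}
    (hc : ∑ j ∈ I, b j * ℓ j c ^ p ^ e = c) (hd : expMod (p ^ e) d ∈ M) :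
    ∑ j ∈ I, ∑ μ ∈ M, monomial μ (b j) * frobeniusComponent (p ^ e) μ (ℓ j) (monomial d c) ^ p ^ e
      = monomial d c := by
  simp_rw [frobeniusComponent_monomial, ite_pow, zero_pow (expChar_pow_pos K p e).ne', mul_ite,
    mul_zero, Finset.sum_ite_eq, if_pos hd, monomial_pow, monomial_mul, expMod_add_smul_expDiv,
    ← map_sum, hc]

theorem sum_monomial_mul_frobeniusComponent_pow {ι : Type*} [DecidableEq ι] {b : ι → K}
    {ℓ : ι → K →+ K} {T : K → Finset ι} (hdec : ∀ x I, T x ⊆ I → ∑ j ∈ I, b j * ℓ j x ^ p ^ e = x)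
    (f : MvPolynomial σ K) :
    ∑ j ∈ f.support.biUnion (T <| coeff · f), ∑ μ ∈ f.support.image (expMod (p ^ e)),
      monomial μ (b j) * frobeniusComponent (p ^ e) μ (ℓ j) f ^ p ^ e = f := by
  set I := f.support.biUnion (T <| coeff · f)
  set M := f.support.image (expMod (p ^ e))
  let Φ : MvPolynomial σ K →+ MvPolynomial σ K := ∑ j ∈ I, ∑ μ ∈ M,
    (AddMonoidHom.mulLeft (monomial μ (b j))).comp
      ((iterateFrobenius _ p e).toAddMonoidHom.comp (frobeniusComponent (p ^ e) μ (ℓ j)))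
  have hΦ : ∀ g, Φ g = ∑ j ∈ I, ∑ μ ∈ M,
      monomial μ (b j) * frobeniusComponent (p ^ e) μ (ℓ j) g ^ p ^ e := fun g => by
    simp [Φ, iterateFrobenius_def]
  rw [← hΦ]
  calc Φ f = ∑ d ∈ f.support, Φ (monomial d (coeff d f)) := by rw [← map_sum, ← as_sum]
    _ = ∑ d ∈ f.support, monomial d (coeff d f) := Finset.sum_congr rfl fun d hd => by
        rw [hΦ]
        exact sum_monomial_mul_frobeniusComponent_monomial
          (hdec _ _ (Finset.subset_biUnion_of_mem (T <| coeff · f) hd))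
          (Finset.mem_image_of_mem _ hd)
    _ = f := (as_sum f).symm

theorem mem_span_frobeniusComponent_pow {ι : Type*} {b : ι → K} {ℓ : ι → K →+ K}
    {T : K → Finset ι} (hdec : ∀ x I, T x ⊆ I → ∑ j ∈ I, b j * ℓ j x ^ p ^ e = x)
    (f : MvPolynomial σ K) :
    f ∈ Ideal.span (Set.range fun i : ι × (σ →₀ ℕ) =>
      frobeniusComponent (p ^ e) i.2 (ℓ i.1) f ^ p ^ e) := by
  classical
  set S := Ideal.span (Set.range fun i : ι × (σ →₀ ℕ) =>
    frobeniusComponent (p ^ e) i.2 (ℓ i.1) f ^ p ^ e)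
  rw [← sum_monomial_mul_frobeniusComponent_pow hdec f]
  exact sum_mem fun j _ => sum_mem fun μ _ => S.mul_mem_left _ (Ideal.subset_span ⟨(j, μ), rfl⟩)

end MvPolynomial

theorem Ie_exists_general (p n : ℕ) (hp : p.Prime) (K : Type*) [Field K] [CharP K p]
    (J : Ideal (MvPolynomial (Fin n) K)) (e : ℕ) :
    ∃ L₀ : Ideal (MvPolynomial (Fin n) K),
      J ≤ frobeniusPower p e L₀ ∧
        ∀ L : Ideal (MvPolynomial (Fin n) K), J ≤ frobeniusPower p e L → L₀ ≤ L := by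
  have : ExpChar K p := ExpChar.prime hp
  obtain ⟨ι, b, ℓ, T, hℓ, hdec⟩ := exists_frobenius_coordinates K p e
  exact exists_isLeast_le_frobeniusPower
    (π := fun i : ι × (Fin n →₀ ℕ) => MvPolynomial.frobeniusComponent (p ^ e) i.2 (ℓ i.1))
    (fun i => MvPolynomial.frobeniusComponent_pow_mul (hℓ i.1) i.2)
    (MvPolynomial.mem_span_frobeniusComponent_pow hdec) J

/-- Let `A = K[x₁, …, xₙ]` be a polynomial ring over a field `K` of prime
characteristic `p`, let `J ⊆ A` be an ideal and `e ≥ 1`. Then the set of ideals `L`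
of `A` with `J ⊆ L^{[p^e]}` has a least element with respect to inclusion; i.e.
`I_e(J)` exists. -/
theorem Ie_exists (p n : ℕ) (hp : p.Prime) (K : Type*) [Field K] [CharP K p]
    (J : Ideal (MvPolynomial (Fin n) K)) (e : ℕ) (he : 1 ≤ e) :
    ∃ L₀ : Ideal (MvPolynomial (Fin n) K),
      J ≤ frobeniusPower p e L₀ ∧
        ∀ L : Ideal (MvPolynomial (Fin n) K), J ≤ frobeniusPower p e L → L₀ ≤ L :=
  Ie_exists_general p n hp K J e
end
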